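/- (Projection error estimate, Eqn. (2.4)) Let x ∈ V = V_1⋯V_N have coefficient tensor X, and for each i = 1,…,N let V̂_i ⊆ V_i be the d̂_i-dimensional POD subspace of Theorem 2.3, i.e., the span of the functions V_{i,d̂_i}ᵀ L_i^{−1} Ψ_i built from the d̂_i leading left singular vectors of Z_i := L_i^T (pt^{i−1} X)^{(1)} (L_{i−1} ⊗ ⋯ ⊗ L_1 ⊗ L_N ⊗ ⋯ ⊗ L_{i+1}). Let x̂ be the ‖·‖_V-orthogonal projection of x onto V̂_1 · V̂_2 ⋯ V̂_N. Then ‖x − x̂‖_V² ≤ Σ_{i=1}^{N} Σ_{k=d̂_i+1}^{d_i} (σ_k^{(i)})², where σ_1^{(i)} ≥ σ_2^{(i)} ≥ ⋯ ≥ σ_{d_i}^{(i)} are the singular values of Z_i. -/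

import Mathlib

/-!
In the coordinates `Y = (L₁ᵀ ⊗ ⋯ ⊗ L_Nᵀ) X` the mass matrices become the identity: `‖·‖_V` is
the Euclidean norm of the coefficients, and `V̂₁ ⋯ V̂_N` becomes the range of `V₁ ⊗ ⋯ ⊗ V_N`.
As `x̂` is the best approximation of `x` in that space, `‖x - x̂‖_V² ≤ ‖Y - (P₁ ⊗ ⋯ ⊗ P_N) Y‖²`
for the orthogonal projections `Pᵢ = Vᵢ Vᵢᵀ`. For commuting orthogonal projections `p, q` one has
`1 - p q ≤ (1 - p) + (1 - q)`, the difference being the projection `(1 - p) (1 - q)`; applied to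
the mode-wise projections `Pᵢ ⊗ id` this gives `‖Y - (⊗ Pᵢ) Y‖² ≤ Σᵢ tr ((1 - Pᵢ) Zᵢ Zᵢᵀ)`, where
`Zᵢ` is the mode-`i` unfolding of `Y`, and `tr ((1 - Pᵢ) Zᵢ Zᵢᵀ)` is the sum of the eigenvalues of
`Zᵢ Zᵢᵀ` discarded by `Pᵢ`.
-/

open MeasureTheory Matrix

/-- Insert the value `k₁` at position `i` of the partial multi-index `krest`,
producing a full multi-index; this realizes the index bookkeeping of the
cyclic permutation `pt^{i-1}` followed by mode-1 matricization. -/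
def combineIdx {N : ℕ} {d : Fin N → ℕ} (i : Fin N) (k₁ : Fin (d i))
    (krest : ∀ j : {j : Fin N // j ≠ i}, Fin (d j.1)) : ∀ j, Fin (d j) :=
  fun j =>
    if h : j = i then (cast (congrArg (fun t => Fin (d t)) h).symm k₁)
    else krest ⟨j, h⟩

theorem IsStarProjection.one_sub_mul_le {R : Type*} [Ring R] [PartialOrder R] [StarRing R]
    [StarOrderedRing R] {p q : R} (hp : IsStarProjection p) (hq : IsStarProjection q)
    (hpq : Commute p q) : 1 - p * q ≤ (1 - p) + (1 - q) := by
  have h : (1 - p) + (1 - q) - (1 - p * q) = (1 - p) * (1 - q) := by noncomm_ring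
  rw [← sub_nonneg, h]
  exact (hp.one_sub.mul hq.one_sub ((Commute.one_left _).sub_left
    ((Commute.one_right p).sub_right hpq))).nonneg

namespace Matrix

section piKron

variable {ι R : Type*} [Fintype ι] {l m n : ι → Type*}

/-- The Kronecker product `A₁ ⊗ ⋯ ⊗ A_N`; its rows and columns are indexed by multi-indices, so
the order of the factors plays no role. -/
def piKron [CommMonoid R] (A : ∀ i, Matrix (m i) (n i) R) : Matrix (∀ i, m i) (∀ i, n i) R :=
  of fun k k' => ∏ i, A i (k i) (k' i)

@[simp]
theorem piKron_apply [CommMonoid R] (A : ∀ i, Matrix (m i) (n i) R) (k : ∀ i, m i)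
    (k' : ∀ i, n i) : piKron A k k' = ∏ i, A i (k i) (k' i) := rfl

theorem piKron_transpose [CommMonoid R] (A : ∀ i, Matrix (m i) (n i) R) :
    (piKron A)ᵀ = piKron fun i => (A i)ᵀ := rfl

section CommSemiring

variable [CommSemiring R]

theorem piKron_mul [DecidableEq ι] [∀ i, Fintype (m i)] (A : ∀ i, Matrix (l i) (m i) R)
    (B : ∀ i, Matrix (m i) (n i) R) : piKron A * piKron B = piKron fun i => A i * B i := by
  ext k k'
  simp only [mul_apply, piKron_apply, ← Finset.prod_mul_distrib, Fintype.prod_sum]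

@[simp]
theorem piKron_one [∀ i, DecidableEq (m i)] : piKron (1 : ∀ i, Matrix (m i) (m i) R) = 1 := by
  ext k k'
  simp only [piKron_apply, Pi.one_apply, one_apply]
  by_cases h : k = k'
  · simp [h]
  · obtain ⟨i, hi⟩ := Function.ne_iff.mp h
    rw [if_neg h]
    exact Finset.prod_eq_zero (Finset.mem_univ i) (if_neg hi)

theorem piKron_conjTranspose [StarRing R] (A : ∀ i, Matrix (m i) (n i) R) :
    (piKron A)ᴴ = piKron fun i => (A i)ᴴ := by
  ext k k'
  simp [star_prod]

end CommSemiring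

theorem isStarProjection_piKron [CommRing R] [StarRing R] [DecidableEq ι] [∀ i, Fintype (n i)]
    {P : ∀ i, Matrix (n i) (n i) R} (hP : ∀ i, IsStarProjection (P i)) :
    IsStarProjection (piKron P) where
  isIdempotentElem := by
    rw [IsIdempotentElem, piKron_mul]
    exact congrArg piKron (funext fun i => (hP i).isIdempotentElem.eq)
  isSelfAdjoint := by
    rw [IsSelfAdjoint, star_eq_conjTranspose, piKron_conjTranspose]
    exact congrArg piKron (funext fun i => (hP i).isSelfAdjoint.star_eq)

theorem piKron_transpose_mul_transpose_piKron_mul_inv [CommRing R] [DecidableEq ι]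
    [∀ i, Fintype (n i)] [∀ i, DecidableEq (n i)] {L : ∀ i, Matrix (n i) (n i) R}
    (hL : ∀ i, IsUnit (L i).det) (V : ∀ i, Matrix (n i) (m i) R) :
    piKron (fun i => (L i)ᵀ) * (piKron fun i => (V i)ᵀ * (L i)⁻¹)ᵀ = piKron V := by
  rw [piKron_transpose, piKron_mul]
  congr
  ext1 i
  rw [transpose_mul, transpose_transpose, transpose_nonsing_inv,
    mul_nonsing_inv_cancel_left _ _ (by rw [det_transpose]; exact hL i)]

section piKronSingle

variable [CommSemiring R] [DecidableEq ι] [∀ i, Fintype (n i)] [∀ i, DecidableEq (n i)]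

def piKronSingle (i : ι) (A : Matrix (n i) (n i) R) : Matrix (∀ j, n j) (∀ j, n j) R :=
  piKron (Pi.mulSingle (M := fun j => Matrix (n j) (n j) R) i A)

variable {A : ∀ i, Matrix (n i) (n i) R} {i : ι}

theorem piKron_update_eq_mul (hA : A i = 1) (B : Matrix (n i) (n i) R) :
    piKron (Function.update A i B) = piKron A * piKronSingle i B := by
  rw [piKronSingle, piKron_mul]
  congr 1
  ext1 j
  by_cases hj : j = i
  · subst hj; simp [hA]
  · simp [hj]

theorem commute_piKron_piKronSingle (hA : A i = 1) (B : Matrix (n i) (n i) R) :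
    Commute (piKron A) (piKronSingle i B) := by
  rw [Commute, SemiconjBy, piKronSingle, piKron_mul, piKron_mul]
  congr 1
  ext1 j
  by_cases hj : j = i
  · subst hj; simp [hA]
  · simp [hj]

end piKronSingle

open scoped MatrixOrder in
theorem one_sub_piKron_le_sum {ι 𝕜 : Type*} [Fintype ι] [DecidableEq ι] [RCLike 𝕜]
    {n : ι → Type*} [∀ i, Fintype (n i)] [∀ i, DecidableEq (n i)]
    {P : ∀ i, Matrix (n i) (n i) 𝕜} (hP : ∀ i, IsStarProjection (P i)) :
    1 - piKron P ≤ ∑ i, (1 - piKronSingle i (P i)) := by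
  suffices ∀ s : Finset ι,
      1 - piKron (s.piecewise P 1) ≤ ∑ i ∈ s, (1 - piKronSingle i (P i)) by
    simpa using this Finset.univ
  intro s
  induction s using Finset.induction_on with
  | empty => simp
  | insert i s hi ih =>
    have hPs : ∀ j, IsStarProjection (s.piecewise P 1 j) := fun j => by
      by_cases hj : j ∈ s <;> simp [hj, hP j, IsStarProjection.one]
    have hPi : ∀ j,
        IsStarProjection (Pi.mulSingle (M := fun j => Matrix (n j) (n j) 𝕜) i (P i) j) :=
      fun j => by
        by_cases hj : j = i
        · subst hj; simpa using hP j
        · simp [hj, IsStarProjection.one]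
    have h1 : s.piecewise P 1 i = 1 := Finset.piecewise_eq_of_notMem _ _ _ hi
    rw [Finset.piecewise_insert, piKron_update_eq_mul h1, Finset.sum_insert hi, add_comm]
    have key := (isStarProjection_piKron hPs).one_sub_mul_le (isStarProjection_piKron hPi)
      (commute_piKron_piKronSingle h1 (P i))
    exact key.trans (add_le_add_left ih _)

end piKron

theorem dotProduct_mulVec_self_of_isStarProjection {n : Type*} [Fintype n]
    {Q : Matrix n n ℝ} (hQ : IsStarProjection Q) (y : n → ℝ) :
    (Q *ᵥ y) ⬝ᵥ (Q *ᵥ y) = y ⬝ᵥ (Q *ᵥ y) := by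
  have hsym : Qᵀ = Q := by
    rw [← conjTranspose_eq_transpose_of_trivial, ← star_eq_conjTranspose, hQ.isSelfAdjoint.star_eq]
  rw [dotProduct_comm, dotProduct_mulVec, ← vecMul_transpose, hsym, vecMul_vecMul,
    hQ.isIdempotentElem.eq, dotProduct_comm]

theorem dotProduct_sub_mulVec_le_of_orthogonal {m n : Type*} [Fintype m] [Fintype n]
    (M : Matrix m n ℝ) (Y : m → ℝ) {a : n → ℝ}
    (horth : ∀ w, (Y - M *ᵥ a) ⬝ᵥ (M *ᵥ w) = 0) (c : n → ℝ) :
    (Y - M *ᵥ a) ⬝ᵥ (Y - M *ᵥ a) ≤ (Y - M *ᵥ c) ⬝ᵥ (Y - M *ᵥ c) := by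
  have h : Y - M *ᵥ c = (Y - M *ᵥ a) + M *ᵥ (a - c) := by rw [mulVec_sub]; abel
  have hnonneg := dotProduct_self_star_nonneg (M *ᵥ (a - c))
  rw [star_trivial] at hnonneg
  rw [h, add_dotProduct, dotProduct_add, dotProduct_add, horth, dotProduct_comm (M *ᵥ _), horth]
  linarith

section LeadingColumns

variable {n r : ℕ} (h : r ≤ n) {W : Matrix (Fin n) (Fin n) ℝ}

theorem one_submatrix_castLE_mul_transpose :
    (1 : Matrix (Fin n) (Fin n) ℝ).submatrix id (Fin.castLE h) *
      ((1 : Matrix (Fin n) (Fin n) ℝ).submatrix id (Fin.castLE h))ᵀ =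
      diagonal fun k : Fin n => if (k : ℕ) < r then 1 else 0 := by
  ext a b
  simp only [mul_apply, submatrix_apply, transpose_apply, id, one_apply, diagonal_apply,
    Fin.ext_iff, Fin.val_castLE, mul_ite, mul_one, mul_zero]
  rw [Fin.sum_univ_eq_sum_range (fun j => if (b : ℕ) = j then if (a : ℕ) = j then 1 else 0 else 0)]
  by_cases hab : (a : ℕ) = b <;> simp [hab, eq_comm]

theorem transpose_mul_submatrix_castLE (hW : Wᵀ * W = 1) :
    (W.submatrix id (Fin.castLE h))ᵀ * W.submatrix id (Fin.castLE h) = 1 := by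
  rw [transpose_submatrix, ← submatrix_mul _ _ _ _ _ Function.bijective_id, hW,
    submatrix_one _ (Fin.castLE_injective h)]

theorem isStarProjection_mul_transpose_submatrix_castLE (hW : Wᵀ * W = 1) :
    IsStarProjection (W.submatrix id (Fin.castLE h) * (W.submatrix id (Fin.castLE h))ᵀ) where
  isIdempotentElem := by
    rw [IsIdempotentElem, Matrix.mul_assoc, ← Matrix.mul_assoc _ (W.submatrix _ _),
      transpose_mul_submatrix_castLE h hW, Matrix.one_mul]
  isSelfAdjoint := by
    rw [IsSelfAdjoint, star_eq_conjTranspose, conjTranspose_eq_transpose_of_trivial,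
      transpose_mul, transpose_transpose]

theorem trace_one_sub_mul_transpose_submatrix_castLE_mul (hW : Wᵀ * W = 1) (ν : Fin n → ℝ) :
    trace ((1 - W.submatrix id (Fin.castLE h) * (W.submatrix id (Fin.castLE h))ᵀ) *
        (W * diagonal ν * Wᵀ)) =
      ∑ k ∈ Finset.univ.filter (fun k : Fin n => r ≤ (k : ℕ)), ν k := by
  have hWU : Wᵀ * W.submatrix id (Fin.castLE h) =
      (1 : Matrix (Fin n) (Fin n) ℝ).submatrix id (Fin.castLE h) := by
    rw [← hW, submatrix_mul _ _ _ _ _ Function.bijective_id, submatrix_id_id]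
  have hsplit : Wᵀ * (W.submatrix id (Fin.castLE h) * (W.submatrix id (Fin.castLE h))ᵀ) * W =
      (Wᵀ * W.submatrix id (Fin.castLE h)) * (Wᵀ * W.submatrix id (Fin.castLE h))ᵀ := by
    rw [transpose_mul, transpose_transpose]
    simp only [Matrix.mul_assoc]
  have hconj : Wᵀ * (1 - W.submatrix id (Fin.castLE h) * (W.submatrix id (Fin.castLE h))ᵀ) * W =
      diagonal fun k : Fin n => if r ≤ (k : ℕ) then 1 else 0 := by
    rw [Matrix.mul_sub, Matrix.sub_mul, Matrix.mul_one, hW, hsplit, hWU,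
      one_submatrix_castLE_mul_transpose, ← diagonal_one, diagonal_sub]
    congr 1
    ext k
    by_cases hk : (k : ℕ) < r <;> simp [hk, Nat.not_le.mpr, Nat.le_of_not_lt]
  calc _ = trace (Wᵀ * (1 - W.submatrix id (Fin.castLE h) * (W.submatrix id (Fin.castLE h))ᵀ) *
          W * diagonal ν) := by
        rw [← Matrix.mul_assoc, ← Matrix.mul_assoc, trace_mul_comm]
        simp only [Matrix.mul_assoc]
    _ = _ := by
        rw [hconj, diagonal_mul_diagonal, trace_diagonal, Finset.sum_filter]
        simp

end LeadingColumns

end Matrix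

section ModeUnfold

variable {N : ℕ} {d e : Fin N → ℕ} {R : Type*} (i : Fin N)

@[simp]
theorem combineIdx_self (a : Fin (d i)) (kr : ∀ j : {j : Fin N // j ≠ i}, Fin (d j)) :
    combineIdx i a kr i = a := by
  simp [combineIdx]

@[simp]
theorem combineIdx_of_ne {j : Fin N} (hj : j ≠ i) (a : Fin (d i))
    (kr : ∀ j : {j : Fin N // j ≠ i}, Fin (d j)) : combineIdx i a kr j = kr ⟨j, hj⟩ := by
  simp [combineIdx, hj]

theorem sum_eq_sum_combineIdx {M : Type*} [AddCommMonoid M] (f : (∀ j, Fin (d j)) → M) :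
    ∑ k, f k = ∑ a, ∑ kr, f (combineIdx i a kr) := by
  have h : ∀ a kr, combineIdx i a kr = (Equiv.piSplitAt i fun j => Fin (d j)).symm (a, kr) :=
    fun a kr => funext fun j => by
      by_cases hj : j = i
      · subst hj; simp
      · simp [hj]
  rw [← (Equiv.piSplitAt i fun j => Fin (d j)).symm.sum_comp, Fintype.sum_prod_type]
  simp only [h]

theorem piKron_combineIdx [CommMonoid R] (A : ∀ j, Matrix (Fin (e j)) (Fin (d j)) R)
    (a : Fin (e i)) (b : Fin (d i)) (kr : ∀ j : {j : Fin N // j ≠ i}, Fin (e j))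
    (lr : ∀ j : {j : Fin N // j ≠ i}, Fin (d j)) :
    piKron A (combineIdx i a kr) (combineIdx i b lr) =
      A i a b * piKron (fun j : {j : Fin N // j ≠ i} => A j) kr lr := by
  rw [piKron_apply, Fintype.prod_eq_mul_prod_subtype_ne _ i, combineIdx_self, combineIdx_self]
  exact congrArg _ (Finset.prod_congr rfl fun j _ => by
    rw [combineIdx_of_ne i j.2, combineIdx_of_ne i j.2])

def modeUnfold (Y : (∀ j, Fin (d j)) → R) :
    Matrix (Fin (d i)) (∀ j : {j : Fin N // j ≠ i}, Fin (d j)) R :=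
  of fun a kr => Y (combineIdx i a kr)

theorem modeUnfold_piKron_mulVec [CommSemiring R] (A : ∀ j, Matrix (Fin (e j)) (Fin (d j)) R)
    (X : (∀ j, Fin (d j)) → R) :
    modeUnfold i (piKron A *ᵥ X) =
      A i * modeUnfold i X * (piKron fun j : {j : Fin N // j ≠ i} => A j)ᵀ := by
  ext a kr
  simp only [modeUnfold, of_apply, mulVec, dotProduct, sum_eq_sum_combineIdx i, piKron_combineIdx,
    mul_apply, transpose_apply, Finset.sum_mul]
  rw [Finset.sum_comm]
  exact Finset.sum_congr rfl fun lr _ => Finset.sum_congr rfl fun b _ => by ring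

theorem dotProduct_piKronSingle_mulVec [CommSemiring R] (A : Matrix (Fin (d i)) (Fin (d i)) R)
    (Y : (∀ j, Fin (d j)) → R) :
    Y ⬝ᵥ (piKronSingle i A *ᵥ Y) = trace ((modeUnfold i Y)ᵀ * A * modeUnfold i Y) := by
  have hrest : (fun j : {j : Fin N // j ≠ i} =>
      Pi.mulSingle (M := fun j => Matrix (Fin (d j)) (Fin (d j)) R) i A j) = 1 := by
    ext1 j; simp [j.2]
  simp only [piKronSingle, dotProduct, mulVec, sum_eq_sum_combineIdx i, piKron_combineIdx, hrest,
    piKron_one, Pi.mulSingle_eq_same, one_apply, mul_ite, mul_one, mul_zero, ite_mul, zero_mul,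
    Finset.sum_ite_eq, Finset.mem_univ, if_true, trace, diag, mul_apply, transpose_apply,
    modeUnfold, of_apply, Finset.mul_sum, Finset.sum_mul]
  rw [Finset.sum_comm]
  exact Finset.sum_congr rfl fun kr _ => by rw [Finset.sum_comm]; simp only [mul_assoc]

theorem dotProduct_one_sub_piKronSingle_mulVec [CommRing R]
    (A : Matrix (Fin (d i)) (Fin (d i)) R) (Y : (∀ j, Fin (d j)) → R) :
    Y ⬝ᵥ ((1 - piKronSingle i A) *ᵥ Y) =
      trace ((1 - A) * (modeUnfold i Y * (modeUnfold i Y)ᵀ)) := by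
  have h1 : (1 : Matrix (∀ j, Fin (d j)) (∀ j, Fin (d j)) R) = piKronSingle i 1 := by
    rw [piKronSingle, Pi.mulSingle_one, piKron_one]
  rw [h1, sub_mulVec, dotProduct_sub, dotProduct_piKronSingle_mulVec,
    dotProduct_piKronSingle_mulVec, ← trace_sub, ← Matrix.sub_mul, ← Matrix.mul_sub,
    Matrix.mul_assoc, trace_mul_comm, Matrix.mul_assoc]

end ModeUnfold

open scoped MatrixOrder in
theorem dotProduct_sub_piKron_mulVec_le {N : ℕ} {d : Fin N → ℕ}
    {P : ∀ i, Matrix (Fin (d i)) (Fin (d i)) ℝ} (hP : ∀ i, IsStarProjection (P i))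
    (Y : (∀ i, Fin (d i)) → ℝ) :
    (Y - piKron P *ᵥ Y) ⬝ᵥ (Y - piKron P *ᵥ Y) ≤
      ∑ i, trace ((1 - P i) * (modeUnfold i Y * (modeUnfold i Y)ᵀ)) := by
  have hle := (le_iff.mp (one_sub_piKron_le_sum hP)).dotProduct_mulVec_nonneg Y
  rw [star_trivial, sub_mulVec, dotProduct_sub, sub_nonneg] at hle
  have hY : Y - piKron P *ᵥ Y = (1 - piKron P) *ᵥ Y := by rw [sub_mulVec, one_mulVec]
  rw [hY, dotProduct_mulVec_self_of_isStarProjection (isStarProjection_piKron hP).one_sub]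
  refine hle.trans_eq ?_
  simp only [sum_mulVec, dotProduct_sum, dotProduct_one_sub_piKronSingle_mulVec]

section ProductFunctions

variable {ι : Type*} [Fintype ι] {Ω : ι → Type*} {m n : ι → Type*}

def prodFun (ψ : ∀ i, n i → Ω i → ℝ) (k : ∀ i, n i) : (∀ i, Ω i) → ℝ :=
  fun ω => ∏ i, ψ i (k i) (ω i)

variable [DecidableEq ι] [∀ i, Fintype (n i)]

theorem linearCombination_prodFun_apply (ψ : ∀ i, n i → Ω i → ℝ) (C : (∀ i, n i) → ℝ)
    (ω : ∀ i, Ω i) :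
    Fintype.linearCombination ℝ (prodFun ψ) C ω = ∑ k, C k * ∏ i, ψ i (k i) (ω i) := by
  simp [Fintype.linearCombination_apply, prodFun]

theorem span_prodFun_eq_range (ψ : ∀ i, n i → Ω i → ℝ) :
    Submodule.span ℝ {f | ∃ k : ∀ i, n i, f = fun ω => ∏ i, ψ i (k i) (ω i)} =
      LinearMap.range (Fintype.linearCombination ℝ (prodFun ψ)) := by
  rw [Fintype.range_linearCombination]
  congr 1
  ext f
  exact exists_congr fun k => eq_comm

theorem linearCombination_prodFun_of_eq_sum [∀ i, Fintype (m i)]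
    {φ : ∀ i, m i → Ω i → ℝ} {ψ : ∀ i, n i → Ω i → ℝ} {B : ∀ i, Matrix (m i) (n i) ℝ}
    (hφ : ∀ i j ω, φ i j ω = ∑ k, B i j k * ψ i k ω) (c : (∀ i, m i) → ℝ) :
    Fintype.linearCombination ℝ (prodFun φ) c =
      Fintype.linearCombination ℝ (prodFun ψ) (c ᵥ* piKron B) := by
  ext ω
  simp only [linearCombination_prodFun_apply, hφ, Fintype.prod_sum, vecMul, dotProduct,
    piKron_apply, Finset.mul_sum, Finset.sum_mul]
  rw [Finset.sum_comm]
  exact Finset.sum_congr rfl fun k _ => Finset.sum_congr rfl fun j _ => by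
    rw [Finset.prod_mul_distrib]; ring

end ProductFunctions

noncomputable def massMatrix {Ω n : Type*} [MeasurableSpace Ω] (μ : Measure Ω)
    (ψ : n → Ω → ℝ) : Matrix n n ℝ :=
  of fun k l => ∫ ω, ψ k ω * ψ l ω ∂μ

section MassMatrix

variable {ι : Type*} [Fintype ι] {Ω : ι → Type*} [∀ i, MeasurableSpace (Ω i)]
  (μ : ∀ i, Measure (Ω i)) [∀ i, SigmaFinite (μ i)] {m n : ι → Type*} {ψ : ∀ i, n i → Ω i → ℝ}

theorem integrable_prodFun_mul (hψ : ∀ i k, MemLp (ψ i k) 2 (μ i)) (k l : ∀ i, n i) :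
    Integrable (fun ω => prodFun ψ k ω * prodFun ψ l ω) (Measure.pi μ) := by
  simp only [prodFun, ← Finset.prod_mul_distrib]
  exact Integrable.fintype_prod_dep (f := fun i ω => ψ i (k i) ω * ψ i (l i) ω)
    fun i => (hψ i (k i)).integrable_mul (hψ i (l i))

theorem integral_prodFun_mul (k l : ∀ i, n i) :
    ∫ ω, prodFun ψ k ω * prodFun ψ l ω ∂(Measure.pi μ) =
      piKron (fun i => massMatrix (μ i) (ψ i)) k l := by
  simp only [prodFun, ← Finset.prod_mul_distrib, piKron_apply, massMatrix, of_apply]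
  exact integral_fintype_prod_eq_prod (fun i ω => ψ i (k i) ω * ψ i (l i) ω)

variable [DecidableEq ι] [∀ i, Fintype (n i)]

theorem integral_linearCombination_prodFun_mul (hψ : ∀ i k, MemLp (ψ i k) 2 (μ i))
    (C D : (∀ i, n i) → ℝ) :
    ∫ ω, Fintype.linearCombination ℝ (prodFun ψ) C ω *
        Fintype.linearCombination ℝ (prodFun ψ) D ω ∂(Measure.pi μ) =
      C ⬝ᵥ (piKron (fun i => massMatrix (μ i) (ψ i)) *ᵥ D) := by
  have hint := integrable_prodFun_mul μ hψ
  simp only [Fintype.linearCombination_apply, Finset.sum_apply, Pi.smul_apply, smul_eq_mul,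
    Finset.sum_mul_sum]
  rw [integral_finsetSum _ fun k _ => integrable_finsetSum _ fun l _ =>
    ((hint k l).const_mul (C k * D l)).congr (ae_of_all _ fun ω => by ring)]
  refine Finset.sum_congr rfl fun k _ => ?_
  rw [integral_finsetSum _ fun l _ =>
    ((hint k l).const_mul (C k * D l)).congr (ae_of_all _ fun ω => by ring)]
  simp only [mulVec, dotProduct, Finset.mul_sum, ← integral_prodFun_mul μ]
  refine Finset.sum_congr rfl fun l _ => ?_
  rw [← integral_mul_const, ← integral_const_mul]
  exact integral_congr_ae (ae_of_all _ fun ω => by ring)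

variable {L : ∀ i, Matrix (n i) (n i) ℝ}

theorem integral_linearCombination_prodFun_mul_eq_dotProduct (hψ : ∀ i k, MemLp (ψ i k) 2 (μ i))
    (hL : ∀ i, massMatrix (μ i) (ψ i) = L i * (L i)ᵀ) (C D : (∀ i, n i) → ℝ) :
    ∫ ω, Fintype.linearCombination ℝ (prodFun ψ) C ω *
        Fintype.linearCombination ℝ (prodFun ψ) D ω ∂(Measure.pi μ) =
      (piKron (fun i => (L i)ᵀ) *ᵥ C) ⬝ᵥ (piKron (fun i => (L i)ᵀ) *ᵥ D) := by
  rw [integral_linearCombination_prodFun_mul μ hψ, funext hL, ← piKron_mul, ← mulVec_mulVec,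
    dotProduct_mulVec, show piKron L = (piKron fun i => (L i)ᵀ)ᵀ from rfl, vecMul_transpose]

theorem integral_sq_sub_le_of_orthogonal [∀ i, DecidableEq (n i)] [∀ i, Fintype (m i)]
    (hψ : ∀ i k, MemLp (ψ i k) 2 (μ i)) (hL : ∀ i, massMatrix (μ i) (ψ i) = L i * (L i)ᵀ)
    (hLunit : ∀ i, IsUnit (L i).det) {V : ∀ i, Matrix (n i) (m i) ℝ} {φ : ∀ i, m i → Ω i → ℝ}
    (hφ : ∀ i j ω, φ i j ω = ∑ k, ((V i)ᵀ * (L i)⁻¹) j k * ψ i k ω) (X : (∀ i, n i) → ℝ)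
    {a : (∀ i, m i) → ℝ}
    (horth : ∀ w, ∫ ω, (Fintype.linearCombination ℝ (prodFun ψ) X ω -
        Fintype.linearCombination ℝ (prodFun φ) a ω) *
          Fintype.linearCombination ℝ (prodFun φ) w ω ∂(Measure.pi μ) = 0) :
    ∫ ω, (Fintype.linearCombination ℝ (prodFun ψ) X ω -
        Fintype.linearCombination ℝ (prodFun φ) a ω) ^ 2 ∂(Measure.pi μ) ≤
      (piKron (fun i => (L i)ᵀ) *ᵥ X - piKron (fun i => V i * (V i)ᵀ) *ᵥ
          piKron (fun i => (L i)ᵀ) *ᵥ X) ⬝ᵥ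
        (piKron (fun i => (L i)ᵀ) *ᵥ X - piKron (fun i => V i * (V i)ᵀ) *ᵥ
          piKron (fun i => (L i)ᵀ) *ᵥ X) := by
  have hinner := integral_linearCombination_prodFun_mul_eq_dotProduct μ hψ hL
  have hred : ∀ c, piKron (fun i => (L i)ᵀ) *ᵥ (c ᵥ* piKron fun i => (V i)ᵀ * (L i)⁻¹) =
      piKron V *ᵥ c := fun c => by
    rw [← transpose_transpose (piKron fun i => (V i)ᵀ * (L i)⁻¹), vecMul_transpose,
      mulVec_mulVec, piKron_transpose_mul_transpose_piKron_mul_inv hLunit]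
  have hsub : ∀ C ω, Fintype.linearCombination ℝ (prodFun ψ) X ω -
      Fintype.linearCombination ℝ (prodFun ψ) C ω =
        Fintype.linearCombination ℝ (prodFun ψ) (X - C) ω := fun C ω => by
    rw [map_sub, Pi.sub_apply]
  have horth' : ∀ w, (piKron (fun i => (L i)ᵀ) *ᵥ X - piKron V *ᵥ a) ⬝ᵥ (piKron V *ᵥ w) = 0 :=
    fun w => by
      simpa only [linearCombination_prodFun_of_eq_sum hφ, hsub, hinner, mulVec_sub, hred] using
        horth w
  calc _ = (piKron (fun i => (L i)ᵀ) *ᵥ X - piKron V *ᵥ a) ⬝ᵥ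
        (piKron (fun i => (L i)ᵀ) *ᵥ X - piKron V *ᵥ a) := by
        simp only [sq, linearCombination_prodFun_of_eq_sum hφ, hsub, hinner, mulVec_sub, hred]
    _ ≤ _ := by
        rw [← piKron_mul, ← mulVec_mulVec]
        exact dotProduct_sub_mulVec_le_of_orthogonal _ _ horth' _

end MassMatrix

theorem pod_projection_error_estimate_general
    {N : ℕ} {Ω : Fin N → Type} [∀ i, MeasurableSpace (Ω i)]
    (μ : ∀ i, Measure (Ω i)) [∀ i, SigmaFinite (μ i)]
    {d : Fin N → ℕ} (ψ : ∀ i, Fin (d i) → Ω i → ℝ)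
    (hψ : ∀ i k, MemLp (ψ i k) 2 (μ i))
    (L : ∀ i, Matrix (Fin (d i)) (Fin (d i)) ℝ)
    (hLunit : ∀ i, IsUnit (L i).det)
    (hL : ∀ i, (Matrix.of fun k l => ∫ ω, ψ i k ω * ψ i l ω ∂(μ i))
            = L i * (L i)ᵀ)
    (X : (∀ i, Fin (d i)) → ℝ)
    (x : (∀ i, Ω i) → ℝ)
    (hx : ∀ ω, x ω = ∑ k : ∀ i, Fin (d i), X k * ∏ i, ψ i (k i) (ω i))
    (dr : Fin N → ℕ) (hdr : ∀ i, dr i ≤ d i)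
    -- the matrices `Zᵢ`
    (Z : ∀ i, Matrix (Fin (d i)) (∀ j : {j : Fin N // j ≠ i}, Fin (d j.1)) ℝ)
    (hZ : ∀ i, Z i = (L i)ᵀ *
        Matrix.of (fun (k₁ : Fin (d i))
            (kr : ∀ j : {j : Fin N // j ≠ i}, Fin (d j.1)) =>
          X (combineIdx i k₁ kr)) *
        Matrix.of (fun k l : ∀ j : {j : Fin N // j ≠ i}, Fin (d j.1) =>
          ∏ j, L j.1 (k j) (l j)))
    -- sorted spectral decompositions of `Zᵢ Zᵢᵀ`
    (W : ∀ i, Matrix (Fin (d i)) (Fin (d i)) ℝ) (ν : ∀ i, Fin (d i) → ℝ)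
    (hW : ∀ i, (W i)ᵀ * W i = 1)
    (hspec : ∀ i, Z i * (Z i)ᵀ = W i * Matrix.diagonal (ν i) * (W i)ᵀ)
    -- the matrices `V_{i,d̂ᵢ}` of leading left singular vectors
    (V : ∀ i, Matrix (Fin (d i)) (Fin (dr i)) ℝ)
    (hV : ∀ i, V i = (W i).submatrix id (Fin.castLE (hdr i)))
    -- the reduced basis functions `(φ̂ᵢ¹,…,φ̂ᵢ^{d̂ᵢ})ᵀ = V_{i,d̂ᵢ}ᵀ Lᵢ⁻¹ Ψᵢ`
    (φr : ∀ i, Fin (dr i) → Ω i → ℝ)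
    (hφr : ∀ i j ω, φr i j ω = ∑ k, ((V i)ᵀ * (L i)⁻¹) j k * ψ i k ω)
    -- `x̂`: the `‖·‖_V`-orthogonal projection of `x` onto `V̂_1 · V̂_2 ⋯ V̂_N`
    (xh : (∀ i, Ω i) → ℝ)
    (hxhmem : xh ∈ Submodule.span ℝ
        {f : (∀ i, Ω i) → ℝ | ∃ k : ∀ i, Fin (dr i),
          f = fun ω => ∏ i, φr i (k i) (ω i)})
    (hxhorth : ∀ y ∈ Submodule.span ℝ
        {f : (∀ i, Ω i) → ℝ | ∃ k : ∀ i, Fin (dr i),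
          f = fun ω => ∏ i, φr i (k i) (ω i)},
        ∫ ω, (x ω - xh ω) * y ω ∂(Measure.pi μ) = 0) :
    ∫ ω, (x ω - xh ω) ^ 2 ∂(Measure.pi μ)
      ≤ ∑ i, ∑ k ∈ Finset.univ.filter (fun k : Fin (d i) => dr i ≤ (k : ℕ)),
          ν i k := by
  obtain rfl : x = Fintype.linearCombination ℝ (prodFun ψ) X :=
    funext fun ω => by rw [hx, linearCombination_prodFun_apply]
  rw [span_prodFun_eq_range] at hxhmem hxhorth
  obtain ⟨a, rfl⟩ := hxhmem
  have hP : ∀ i, IsStarProjection (V i * (V i)ᵀ) := fun i =>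
    hV i ▸ isStarProjection_mul_transpose_submatrix_castLE (hdr i) (hW i)
  have hZY : ∀ i, modeUnfold i (piKron (fun i => (L i)ᵀ) *ᵥ X) = Z i := fun i => by
    rw [hZ i, modeUnfold_piKron_mulVec, piKron_transpose]
    rfl
  calc _ ≤ _ := integral_sq_sub_le_of_orthogonal μ hψ hL hLunit hφr X
          fun w => hxhorth _ (LinearMap.mem_range_self _ w)
    _ ≤ _ := dotProduct_sub_piKron_mulVec_le hP _
    _ = _ := Finset.sum_congr rfl fun i _ => by
        rw [hZY, hspec, hV, trace_one_sub_mul_transpose_submatrix_castLE_mul (hdr i) (hW i)]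

/-- (Projection error estimate, Eqn. (2.4)) Let `x` have coefficient tensor
`X`, and for each mode `i` let `V̂ᵢ` be the `d̂ᵢ`-dimensional POD subspace
spanned by the functions `V_{i,d̂ᵢ}ᵀ Lᵢ⁻¹ Ψᵢ` built from the `d̂ᵢ` leading
left singular vectors of
`Zᵢ = Lᵢᵀ (pt^{i-1} X)⁽¹⁾ (L_{i-1} ⊗ ⋯ ⊗ L_1 ⊗ L_N ⊗ ⋯ ⊗ L_{i+1})`
(encoded via an orthogonal matrix `W i` diagonalizing `Zᵢ Zᵢᵀ` with
decreasingly sorted eigenvalues `ν i`; the singular values satisfy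
`(σ_k^{(i)})² = ν i k`).  If `x̂` is the `‖·‖_V`-orthogonal projection of `x`
onto `V̂_1 · V̂_2 ⋯ V̂_N`, then
`‖x - x̂‖_V² ≤ Σᵢ Σ_{k = d̂ᵢ+1}^{dᵢ} (σ_k^{(i)})²`. -/
theorem pod_projection_error_estimate
    {N : ℕ} {Ω : Fin N → Type} [∀ i, MeasurableSpace (Ω i)]
    (μ : ∀ i, Measure (Ω i)) [∀ i, SigmaFinite (μ i)]
    {d : Fin N → ℕ} (ψ : ∀ i, Fin (d i) → Ω i → ℝ)
    (hψ : ∀ i k, MemLp (ψ i k) 2 (μ i))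
    (hψli : ∀ i, LinearIndependent ℝ (ψ i))
    (L : ∀ i, Matrix (Fin (d i)) (Fin (d i)) ℝ)
    (hLunit : ∀ i, IsUnit (L i).det)
    (hL : ∀ i, (Matrix.of fun k l => ∫ ω, ψ i k ω * ψ i l ω ∂(μ i))
            = L i * (L i)ᵀ)
    (X : (∀ i, Fin (d i)) → ℝ)
    (x : (∀ i, Ω i) → ℝ)
    (hx : ∀ ω, x ω = ∑ k : ∀ i, Fin (d i), X k * ∏ i, ψ i (k i) (ω i))
    (dr : Fin N → ℕ) (hdr : ∀ i, dr i ≤ d i)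
    -- the matrices `Zᵢ`
    (Z : ∀ i, Matrix (Fin (d i)) (∀ j : {j : Fin N // j ≠ i}, Fin (d j.1)) ℝ)
    (hZ : ∀ i, Z i = (L i)ᵀ *
        Matrix.of (fun (k₁ : Fin (d i))
            (kr : ∀ j : {j : Fin N // j ≠ i}, Fin (d j.1)) =>
          X (combineIdx i k₁ kr)) *
        Matrix.of (fun k l : ∀ j : {j : Fin N // j ≠ i}, Fin (d j.1) =>
          ∏ j, L j.1 (k j) (l j)))
    -- sorted spectral decompositions of `Zᵢ Zᵢᵀ`
    (W : ∀ i, Matrix (Fin (d i)) (Fin (d i)) ℝ) (ν : ∀ i, Fin (d i) → ℝ)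
    (hW : ∀ i, (W i)ᵀ * W i = 1)
    (hν : ∀ i, ∀ a b : Fin (d i), a ≤ b → ν i b ≤ ν i a)
    (hspec : ∀ i, Z i * (Z i)ᵀ = W i * Matrix.diagonal (ν i) * (W i)ᵀ)
    -- the matrices `V_{i,d̂ᵢ}` of leading left singular vectors
    (V : ∀ i, Matrix (Fin (d i)) (Fin (dr i)) ℝ)
    (hV : ∀ i, V i = (W i).submatrix id (Fin.castLE (hdr i)))
    -- the reduced basis functions `(φ̂ᵢ¹,…,φ̂ᵢ^{d̂ᵢ})ᵀ = V_{i,d̂ᵢ}ᵀ Lᵢ⁻¹ Ψᵢ`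
    (φr : ∀ i, Fin (dr i) → Ω i → ℝ)
    (hφr : ∀ i j ω, φr i j ω = ∑ k, ((V i)ᵀ * (L i)⁻¹) j k * ψ i k ω)
    -- `x̂`: the `‖·‖_V`-orthogonal projection of `x` onto `V̂_1 · V̂_2 ⋯ V̂_N`
    (xh : (∀ i, Ω i) → ℝ)
    (hxhmem : xh ∈ Submodule.span ℝ
        {f : (∀ i, Ω i) → ℝ | ∃ k : ∀ i, Fin (dr i),
          f = fun ω => ∏ i, φr i (k i) (ω i)})
    (hxhorth : ∀ y ∈ Submodule.span ℝ
        {f : (∀ i, Ω i) → ℝ | ∃ k : ∀ i, Fin (dr i),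
          f = fun ω => ∏ i, φr i (k i) (ω i)},
        ∫ ω, (x ω - xh ω) * y ω ∂(Measure.pi μ) = 0) :
    ∫ ω, (x ω - xh ω) ^ 2 ∂(Measure.pi μ)
      ≤ ∑ i, ∑ k ∈ Finset.univ.filter (fun k : Fin (d i) => dr i ≤ (k : ℕ)),
          ν i k :=
  pod_projection_error_estimate_general μ ψ hψ L hLunit hL X x hx dr hdr Z hZ W ν hW hspec V hV φr
    hφr xh hxhmem hxhorth
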